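/- Let Y_1^*, Y_2^*, … be mutually independent real-valued random variables, (r_k)_{k≥1} nonnegative reals, v_k = ∏_{j=1}^{k} 1/(1 + r_j) (v_0 = 1), and S_k^* = Σ_{j=1}^{k} v_{j−1} Y_j^*. Suppose there exist an integer l ≥ 1 and a real q_l > 0 such that for all n ≥ 1 the random variables Y_{n+l}^* and q_l Y_n^* are identically distributed, r_{n+l} = r_n for all n ≥ 1, and q_l v_l ≤ 1. Then for every h ≥ 0 with E[e^{h S_l^*}] ≤ 1: sup_{n≥1} E[e^{h S_n^*}] ≤ max_{1≤k≤l} sup_{i≥0} E[e^{h (q_l v_l)^i S_k^*}]. -/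

import Mathlib

/-!
Since the `Y*_j` are independent, `E[e^{t S*_{n+l}}]` splits into the contribution of the first
`l` summands and that of the remaining `n`; periodicity of `r` and of the laws of `Y*` turns
the latter into `E[e^{t q_l v_l S*_n}]`. Hence
`E[e^{t S*_{n+l}}] = E[e^{t S*_l}] E[e^{t q_l v_l S*_n}]`.
For `0 ≤ t ≤ h`, convexity of `exp` gives `E[e^{t S*_l}] ≤ 1`, so writing `n = i l + k` with
`1 ≤ k ≤ l` and iterating, `E[e^{h S*_n}] ≤ E[e^{h (q_l v_l)^i S*_k}]`.
-/

open MeasureTheory ProbabilityTheory Finset Real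
open scoped ENNReal

@[to_additive sum_Icc_one_eq_sum_range]
theorem Finset.prod_Icc_one_eq_prod_range {M : Type*} [CommMonoid M] (f : ℕ → M) (n : ℕ) :
    ∏ j ∈ Icc 1 n, f j = ∏ k ∈ range n, f (k + 1) := by
  rw [← Ico_add_one_right_eq_Icc, prod_Ico_eq_prod_range, Nat.add_sub_cancel]
  simp only [add_comm 1]

theorem Finset.prod_Icc_one_add_of_periodic {M : Type*} [CommMonoid M] {f : ℕ → M} {l : ℕ}
    (hf : ∀ n, 1 ≤ n → f (n + l) = f n) (m : ℕ) :
    ∏ j ∈ Icc 1 (l + m), f j = (∏ j ∈ Icc 1 l, f j) * ∏ j ∈ Icc 1 m, f j := by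
  simp only [prod_Icc_one_eq_prod_range, prod_range_add]
  congr 1
  refine prod_congr rfl fun k _ => ?_
  rw [← hf (k + 1) k.succ_pos]
  congr 1
  omega

section Probability

variable {Ω : Type*} [MeasurableSpace Ω] {P : Measure Ω}

theorem lintegral_exp_mul_le_one_of_le [IsProbabilityMeasure P] {X : Ω → ℝ} {t h : ℝ}
    (ht : 0 ≤ t) (hth : t ≤ h) (hX : ∫⁻ ω, ENNReal.ofReal (exp (h * X ω)) ∂P ≤ 1) :
    ∫⁻ ω, ENNReal.ofReal (exp (t * X ω)) ∂P ≤ 1 := by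
  rcases ht.eq_or_lt with rfl | ht
  · simp
  set a := t / h
  have ha0 : 0 ≤ a := div_nonneg ht.le (ht.trans_le hth).le
  have ha1 : a ≤ 1 := div_le_one_of_le₀ hth (ht.trans_le hth).le
  have hconv : ∀ ω, ENNReal.ofReal (exp (t * X ω)) ≤
      ENNReal.ofReal (1 - a) + ENNReal.ofReal a * ENNReal.ofReal (exp (h * X ω)) := by
    intro ω
    have := convexOn_exp.2 (Set.mem_univ 0) (Set.mem_univ (h * X ω)) (sub_nonneg.2 ha1) ha0
      (sub_add_cancel 1 a)
    simp only [smul_eq_mul, mul_zero, zero_add, ← mul_assoc, exp_zero, mul_one] at this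
    rw [div_mul_cancel₀ t (ht.trans_le hth).ne'] at this
    rw [← ENNReal.ofReal_mul ha0, ← ENNReal.ofReal_add (sub_nonneg.2 ha1) (by positivity)]
    exact ENNReal.ofReal_le_ofReal this
  calc ∫⁻ ω, ENNReal.ofReal (exp (t * X ω)) ∂P
      ≤ ENNReal.ofReal (1 - a) + ENNReal.ofReal a * ∫⁻ ω, ENNReal.ofReal (exp (h * X ω)) ∂P := by
        refine (lintegral_mono hconv).trans_eq ?_
        rw [lintegral_add_left measurable_const, lintegral_const, measure_univ, mul_one,
          lintegral_const_mul' _ _ ENNReal.ofReal_ne_top]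
    _ ≤ ENNReal.ofReal (1 - a) + ENNReal.ofReal a * 1 := by gcongr
    _ = 1 := by
        rw [mul_one, ← ENNReal.ofReal_add (sub_nonneg.2 ha1) ha0, sub_add_cancel,
          ENNReal.ofReal_one]

theorem lintegral_exp_mul_sum_eq_prod_of_iIndepFun {ι : Type*} {Z : ι → Ω → ℝ}
    (hZ : ∀ i, Measurable (Z i)) (hind : iIndepFun Z P) (a : ι → ℝ) (t : ℝ) (s : Finset ι) :
    ∫⁻ ω, ENNReal.ofReal (exp (t * ∑ i ∈ s, a i * Z i ω)) ∂P =
      ∏ i ∈ s, ∫⁻ ω, ENNReal.ofReal (exp (t * a i * Z i ω)) ∂P := by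
  have hmeas : ∀ i, Measurable fun x : ℝ => ENNReal.ofReal (exp (t * a i * x)) := fun i => by
    fun_prop
  have := lintegral_prod_eq_prod_lintegral_of_indepFun s _ (hind.comp _ hmeas)
    fun i => (hmeas i).comp (hZ i)
  simp only [Function.comp_apply] at this
  simp only [← this, mul_sum, ← mul_assoc, exp_sum,
    ENNReal.ofReal_prod_of_nonneg fun i _ => (exp_pos _).le]

theorem lintegral_exp_mul_sum_range_add {Y : ℕ → Ω → ℝ} (hY : ∀ i, Measurable (Y i))
    (hind : iIndepFun (fun k => Y (k + 1)) P) {v : ℕ → ℝ} {l : ℕ} {q : ℝ}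
    (hv : ∀ m, v (l + m) = v l * v m)
    (hper : ∀ n, 1 ≤ n → P.map (Y (n + l)) = P.map (fun ω => q * Y n ω)) (t : ℝ) (n : ℕ) :
    ∫⁻ ω, ENNReal.ofReal (exp (t * ∑ k ∈ range (n + l), v k * Y (k + 1) ω)) ∂P =
      (∫⁻ ω, ENNReal.ofReal (exp (t * ∑ k ∈ range l, v k * Y (k + 1) ω)) ∂P) *
        ∫⁻ ω, ENNReal.ofReal (exp (t * (q * v l) * ∑ k ∈ range n, v k * Y (k + 1) ω)) ∂P := by
  simp only [lintegral_exp_mul_sum_eq_prod_of_iIndepFun (fun k => hY (k + 1)) hind]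
  rw [add_comm n l, prod_range_add]
  congr 1
  refine prod_congr rfl fun k _ => ?_
  have hident : IdentDistrib (Y (k + 1 + l)) (fun ω => q * Y (k + 1) ω) P P :=
    ⟨(hY _).aemeasurable, ((hY _).const_mul q).aemeasurable, hper _ k.succ_pos⟩
  have := (hident.comp (u := fun x => ENNReal.ofReal (exp (t * v (l + k) * x)))
    (by fun_prop)).lintegral_eq
  simp only [Function.comp_apply] at this
  rw [show l + k + 1 = k + 1 + l by omega, this, hv]
  ring_nf

end Probability

section Iteration

variable {m : ℕ → ℝ → ℝ≥0∞} {l : ℕ} {c h : ℝ}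

theorem apply_mul_add_le_apply_mul_pow (hc0 : 0 ≤ c) (hc1 : c ≤ 1)
    (hrec : ∀ n t, m (n + l) t = m l t * m n (t * c)) (hle : ∀ t ∈ Set.Icc 0 h, m l t ≤ 1)
    (i k : ℕ) : ∀ t ∈ Set.Icc 0 h, m (i * l + k) t ≤ m k (t * c ^ i) := by
  induction i with
  | zero => simp
  | succ i ih =>
    intro t ht
    have htc : t * c ∈ Set.Icc 0 h :=
      ⟨mul_nonneg ht.1 hc0, (mul_le_of_le_one_right ht.1 hc1).trans ht.2⟩
    calc m ((i + 1) * l + k) t = m l t * m (i * l + k) (t * c) := by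
          rw [← hrec, add_mul, one_mul, add_right_comm]
      _ ≤ 1 * m k (t * c * c ^ i) := mul_le_mul' (hle t ht) (ih _ htc)
      _ = m k (t * c ^ (i + 1)) := by rw [one_mul, mul_assoc, ← pow_succ']

theorem iSup_apply_succ_le_iSup_apply_mul_pow (hl : 0 < l) (hc0 : 0 ≤ c) (hc1 : c ≤ 1)
    (hh : 0 ≤ h) (hrec : ∀ n t, m (n + l) t = m l t * m n (t * c))
    (hle : ∀ t ∈ Set.Icc 0 h, m l t ≤ 1) :
    ⨆ n, m (n + 1) h ≤ ⨆ k ∈ Icc 1 l, ⨆ i : ℕ, m k (h * c ^ i) := by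
  refine iSup_le fun n => ?_
  have hk : n % l + 1 ∈ Icc 1 l := mem_Icc.2 ⟨le_add_self, Nat.mod_lt n hl⟩
  have hn : n + 1 = n / l * l + (n % l + 1) := by rw [← add_assoc, Nat.div_add_mod']
  rw [hn]
  exact (apply_mul_add_le_apply_mul_pow hc0 hc1 hrec hle _ _ h ⟨hh, le_rfl⟩).trans
    (le_iSup₂_of_le (n % l + 1) hk (le_iSup_of_le (n / l) le_rfl))

end Iteration

/-- Lemma 3, second assertion.
Random variables are 1-indexed (index `0` unused): `v k = ∏_{j=1}^{k} 1/(1+r_j)`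
(so `v 0 = 1`) and `S*_k = ∑_{j=1}^{k} v_{j-1} Y*_j` (so `S*_0 = 0`).
Assume `l ≥ 1`, `q_l > 0`, `Y*_{n+l}` is distributed as `q_l Y*_n`, `r_{n+l} = r_n`
for all `n ≥ 1`, and `q_l v_l ≤ 1`.  Then for every `h ≥ 0` with `E[e^{h S*_l}] ≤ 1`:
`sup_{n≥1} E[e^{h S*_n}] ≤ max_{1 ≤ k ≤ l} sup_{i ≥ 0} E[e^{h (q_l v_l)^i S*_k}]`. -/
theorem stmt15 {Ω : Type*} [MeasurableSpace Ω] (P : Measure Ω) [IsProbabilityMeasure P]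
    (Ystar : ℕ → Ω → ℝ)
    (hmeas : ∀ i, Measurable (Ystar i))
    (hindep : iIndepFun (fun k : ℕ => Ystar (k + 1)) P)
    (r : ℕ → ℝ) (hr : ∀ k : ℕ, 1 ≤ k → 0 ≤ r k)
    (v : ℕ → ℝ) (hv : ∀ k, v k = ∏ j ∈ Finset.Icc 1 k, (1 + r j)⁻¹)
    (Sstar : ℕ → Ω → ℝ)
    (hSstar : ∀ k ω, Sstar k ω = ∑ j ∈ Finset.Icc 1 k, v (j - 1) * Ystar j ω)
    (l : ℕ) (hl : 1 ≤ l) (q : ℝ) (hq : 0 < q)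
    (hper : ∀ n : ℕ, 1 ≤ n →
      Measure.map (Ystar (n + l)) P = Measure.map (fun ω => q * Ystar n ω) P)
    (hrper : ∀ n : ℕ, 1 ≤ n → r (n + l) = r n)
    (hqv : q * v l ≤ 1)
    (h : ℝ) (hh : 0 ≤ h)
    (hSl : ∫⁻ ω, ENNReal.ofReal (Real.exp (h * Sstar l ω)) ∂P ≤ 1) :
    (⨆ n : ℕ, ∫⁻ ω, ENNReal.ofReal (Real.exp (h * Sstar (n + 1) ω)) ∂P) ≤
      ⨆ k ∈ Finset.Icc 1 l, ⨆ i : ℕ,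
        ∫⁻ ω, ENNReal.ofReal (Real.exp (h * ((q * v l) ^ i * Sstar k ω))) ∂P := by
  have hS : ∀ n ω, Sstar n ω = ∑ k ∈ range n, v k * Ystar (k + 1) ω := fun n ω => by
    simp only [hSstar, sum_Icc_one_eq_sum_range, Nat.add_sub_cancel]
  have hvper : ∀ m, v (l + m) = v l * v m := fun m => by
    simp only [hv]
    exact prod_Icc_one_add_of_periodic (fun n hn => by rw [hrper n hn]) m
  have hc0 : 0 ≤ q * v l := mul_nonneg hq.le <| (hv l).symm ▸
    prod_nonneg fun j hj => inv_nonneg.2 <| add_nonneg zero_le_one (hr j (mem_Icc.1 hj).1)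
  have key := iSup_apply_succ_le_iSup_apply_mul_pow (m := fun n t =>
      ∫⁻ ω, ENNReal.ofReal (exp (t * Sstar n ω)) ∂P) hl hc0 hqv hh
    (fun n t => by
      simp only [hS]
      exact lintegral_exp_mul_sum_range_add hmeas hindep hvper hper t n)
    (fun t ht => lintegral_exp_mul_le_one_of_le ht.1 ht.2 hSl)
  simpa only [mul_assoc] using key
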